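/- Under the hypotheses that ∇ restricts to the distribution D and [g_i, D] ⊆ D for i = 1,…,m, the vertical lifts satisfy [g_i^vlft, D̃] ⊆ D̃, where D̃ = span{D^H, D^vlft}; in particular [g_i^vlft, X^H] = (∇_X g_i)^vlft ∈ Γ(D^vlft) for all X ∈ Γ(D). -/

import Mathlib

section TangentBundleModel

variable {E : Type*} [NormedAddCommGroup E] [NormedSpace ℝ E]

/-- The Lie bracket of vector fields, with the sign convention
`[F,G](p) = DF(p)·G(p) − DG(p)·F(p)` (the convention matching the identity
`[g^vlft, X^H] = (∇_X g)^vlft` used in the paper). -/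
noncomputable def lieBkt {W : Type*} [NormedAddCommGroup W] [NormedSpace ℝ W]
    (F G : W → W) : W → W :=
  fun p => fderiv ℝ F p (G p) - fderiv ℝ G p (F p)

/-- Covariant derivative `(∇_X Y)(x) = DY(x)·X(x) + Γ(x)(X(x))(Y(x))`. -/
noncomputable def covDeriv (Γ : E → E →L[ℝ] E →L[ℝ] E) (X Y : E → E) : E → E :=
  fun x => fderiv ℝ Y x (X x) + Γ x (X x) (Y x)

/-- The vertical lift of a vector field `X` on `Q = E` to `TQ = E × E`. -/
def vlift (X : E → E) : E × E → E × E := fun p => (0, X p.1)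

/-- The horizontal lift of a vector field `X` on `Q = E` to `TQ = E × E`:
`X^H(x,v) = (X(x), −Γ(x)(X(x))(v))`. -/
noncomputable def hlift (Γ : E → E →L[ℝ] E →L[ℝ] E) (X : E → E) : E × E → E × E :=
  fun p => (X p.1, -(Γ p.1 (X p.1) p.2))

/-- The distribution `D̃ = span{D^H, D^vlft}` on `TQ = E × E`. -/
def liftedDist (Γ : E → E →L[ℝ] E →L[ℝ] E) (D : E → Submodule ℝ E)
    (p : E × E) : Set (E × E) :=
  {w | w.1 ∈ D p.1 ∧ w.2 + Γ p.1 w.1 p.2 ∈ D p.1}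

end TangentBundleModel

open ContinuousLinearMap

section Helpers

variable {E : Type*} [NormedAddCommGroup E] [NormedSpace ℝ E]

/-- derivative of `q ↦ Γ (c q) (a q) (b q)`. -/
lemma gammaDeriv {W : Type*} [NormedAddCommGroup W] [NormedSpace ℝ W]
    (Γ : E → E →L[ℝ] E →L[ℝ] E) (hΓ : ContDiff ℝ (⊤ : ℕ∞) Γ)
    {c a b : W → E} {c' a' b' : W →L[ℝ] E} {p : W}
    (hc : HasFDerivAt c c' p) (ha : HasFDerivAt a a' p) (hb : HasFDerivAt b b' p) :
    ∃ L : W →L[ℝ] E, HasFDerivAt (fun q : W => Γ (c q) (a q) (b q)) L p ∧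
      ∀ u, L u = fderiv ℝ Γ (c p) (c' u) (a p) (b p) + Γ (c p) (a' u) (b p)
        + Γ (c p) (a p) (b' u) := by
  have h0 : HasFDerivAt (fun q : W => Γ (c q)) ((fderiv ℝ Γ (c p)).comp c') p :=
    ((hΓ.differentiable (by simp)).differentiableAt.hasFDerivAt).comp p hc
  have h1 := (h0.clm_apply ha).clm_apply hb
  refine ⟨_, h1, fun u => ?_⟩
  simp [ContinuousLinearMap.add_apply, ContinuousLinearMap.comp_apply,
    ContinuousLinearMap.flip_apply]
  abel

/-- derivative of a vertical lift. -/
lemma vliftDeriv {g : E → E} (hg : ContDiff ℝ (⊤ : ℕ∞) g) (p : E × E) :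
    HasFDerivAt (vlift g)
      ((0 : E × E →L[ℝ] E).prod ((fderiv ℝ g p.1).comp (fst ℝ E E))) p :=
  HasFDerivAt.prodMk (hasFDerivAt_const (0 : E) p)
    ((((hg.differentiable (by simp)) p.1).hasFDerivAt).comp p hasFDerivAt_fst)

end Helpers

/-- if `∇` restricts to the distribution `D` and `[g_i, D] ⊆ D` for
`i = 1,…,m`, then `[g_i^vlft, D̃] ⊆ D̃` where `D̃ = span{D^H, D^vlft}`; in particular
`[g_i^vlft, X^H] = (∇_X g_i)^vlft ∈ Γ(D^vlft)` for all sections `X` of `D`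
(using `∇_X g = ∇_g X + [X, g]`). -/
theorem stmt_13 {E : Type*} [NormedAddCommGroup E] [NormedSpace ℝ E]
    (Γ : E → E →L[ℝ] E →L[ℝ] E) (hΓ : ContDiff ℝ (⊤ : ℕ∞) Γ)
    (hsym : ∀ x u v, Γ x u v = Γ x v u)
    (D : E → Submodule ℝ E)
    (hrestrict : ∀ (v X : E → E), ContDiff ℝ (⊤ : ℕ∞) X → (∀ x, X x ∈ D x) →
      ∀ x, covDeriv Γ v X x ∈ D x)
    (m : ℕ) (g : Fin m → E → E) (hg : ∀ i, ContDiff ℝ (⊤ : ℕ∞) (g i))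
    (hgD : ∀ i, ∀ (X : E → E), ContDiff ℝ (⊤ : ℕ∞) X → (∀ x, X x ∈ D x) →
      ∀ x, lieBkt (g i) X x ∈ D x) :
    -- in particular, [g_i^vlft, X^H] = (∇_X g_i)^vlft, a section of D^vlft
    (∀ i, ∀ (X : E → E), ContDiff ℝ (⊤ : ℕ∞) X → (∀ x, X x ∈ D x) →
      ∀ p : E × E, lieBkt (vlift (g i)) (hlift Γ X) p = vlift (covDeriv Γ X (g i)) p ∧
        covDeriv Γ X (g i) p.1 ∈ D p.1) ∧
    -- and [g_i^vlft, D̃] ⊆ D̃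
    (∀ i, ∀ (F : E × E → E × E), ContDiff ℝ (⊤ : ℕ∞) F → (∀ p, F p ∈ liftedDist Γ D p) →
      ∀ p, lieBkt (vlift (g i)) F p ∈ liftedDist Γ D p) := by
  have key : ∀ (X : E → E), ContDiff ℝ (⊤ : ℕ∞) X → (∀ x, X x ∈ D x) →
      ∀ i x, covDeriv Γ X (g i) x ∈ D x := by
    intro X hX hXD i x
    have h : covDeriv Γ X (g i) x = lieBkt (g i) X x + covDeriv Γ (g i) X x := by
      simp only [covDeriv, lieBkt]
      rw [hsym x (X x) (g i x)]
      abel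
    rw [h]
    exact (D x).add_mem (hgD i X hX hXD x) (hrestrict (g i) X hX hXD x)
  constructor
  · -- part 1
    intro i X hX hXD p
    refine ⟨?_, key X hX hXD i p.1⟩
    have hvl := vliftDeriv (hg i) p
    have hXf : HasFDerivAt (fun q : E × E => X q.1)
        ((fderiv ℝ X p.1).comp (fst ℝ E E)) p :=
      (((hX.differentiable (by simp)) p.1).hasFDerivAt).comp p hasFDerivAt_fst
    obtain ⟨L, hL, hLu⟩ := gammaDeriv Γ hΓ hasFDerivAt_fst hXf hasFDerivAt_snd
    have hhl : HasFDerivAt (hlift Γ X)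
        (((fderiv ℝ X p.1).comp (fst ℝ E E)).prod (-L)) p := HasFDerivAt.prodMk hXf hL.neg
    have e1 : fderiv ℝ (vlift (g i)) p = _ := hvl.fderiv
    have e2 : fderiv ℝ (hlift Γ X) p = _ := hhl.fderiv
    simp only [lieBkt, e1, e2]
    have hL0 : L ((0 : E), g i p.1) = Γ p.1 (X p.1) (g i p.1) := by
      rw [hLu]; simp
    ext
    · simp [hlift, vlift]
    · simp [hlift, vlift, hL0, covDeriv]
  · -- part 2
    intro i F hF hFD p
    have hF' : HasFDerivAt F (fderiv ℝ F p) p :=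
      ((hF.differentiable (by simp)) p).hasFDerivAt
    have hvl := vliftDeriv (hg i) p
    have e1 : fderiv ℝ (vlift (g i)) p = _ := hvl.fderiv
    have ebkt : lieBkt (vlift (g i)) F p
        = ((0 : E) - (fderiv ℝ F p (0, g i p.1)).1,
           fderiv ℝ (g i) p.1 (F p).1 - (fderiv ℝ F p (0, g i p.1)).2) := by
      simp only [lieBkt, e1]
      have h2 : vlift (g i) p = ((0 : E), g i p.1) := rfl
      rw [h2]
      ext <;> simp [vlift]
    rw [ebkt]
    have hc0 : HasFDerivAt (fun y : E => (y, p.2))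
        ((ContinuousLinearMap.id ℝ E).prod 0) p.1 :=
      HasFDerivAt.prodMk (hasFDerivAt_id p.1) (hasFDerivAt_const p.2 p.1)
    have hc1 : HasFDerivAt (fun y : E => (y, p.2 + y - p.1))
        ((ContinuousLinearMap.id ℝ E).prod (ContinuousLinearMap.id ℝ E)) p.1 :=
      HasFDerivAt.prodMk (hasFDerivAt_id p.1) (((hasFDerivAt_id p.1).const_add p.2).sub_const p.1)
    have hpt0 : ((p.1 : E), p.2) = p := by simp
    have hpt1 : ((p.1 : E), p.2 + p.1 - p.1) = p := by simp
    have hF0 : HasFDerivAt F (fderiv ℝ F p) ((p.1 : E), p.2) := by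
      rw [hpt0]; exact hF'
    have hF1 : HasFDerivAt F (fderiv ℝ F p) ((p.1 : E), p.2 + p.1 - p.1) := by
      rw [hpt1]; exact hF'
    have hX0smooth : ContDiff ℝ (⊤ : ℕ∞) (fun y : E => (F (y, p.2)).1) :=
      contDiff_fst.comp (hF.comp (contDiff_id.prodMk contDiff_const))
    have hX1smooth : ContDiff ℝ (⊤ : ℕ∞) (fun y : E => (F (y, p.2 + y - p.1)).1) :=
      contDiff_fst.comp (hF.comp (contDiff_id.prodMk
        ((contDiff_const.add contDiff_id).sub contDiff_const)))
    have hX0D : ∀ y, (F (y, p.2)).1 ∈ D y := fun y => (hFD (y, p.2)).1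
    have hX1D : ∀ y, (F (y, p.2 + y - p.1)).1 ∈ D y :=
      fun y => (hFD (y, p.2 + y - p.1)).1
    have hX0d : HasFDerivAt (fun y : E => (F (y, p.2)).1)
        ((fst ℝ E E).comp ((fderiv ℝ F p).comp
          ((ContinuousLinearMap.id ℝ E).prod 0))) p.1 :=
      hasFDerivAt_fst.comp p.1 (hF0.comp p.1 hc0)
    have hX1d : HasFDerivAt (fun y : E => (F (y, p.2 + y - p.1)).1)
        ((fst ℝ E E).comp ((fderiv ℝ F p).comp
          ((ContinuousLinearMap.id ℝ E).prod (ContinuousLinearMap.id ℝ E)))) p.1 :=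
      hasFDerivAt_fst.comp p.1 (hF1.comp p.1 hc1)
    have hsplit : fderiv ℝ F p ((g i p.1 : E), g i p.1)
        = fderiv ℝ F p (g i p.1, 0) + fderiv ℝ F p (0, g i p.1) := by
      rw [← map_add]
      norm_num
    have hmem0 := hrestrict (fun _ => g i p.1) _ hX0smooth hX0D p.1
    have hmem1 := hrestrict (fun _ => g i p.1) _ hX1smooth hX1D p.1
    rw [covDeriv] at hmem0 hmem1
    rw [hX0d.fderiv] at hmem0
    rw [hX1d.fderiv] at hmem1
    have hda : (fderiv ℝ F p (0, g i p.1)).1 ∈ D p.1 := by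
      have h := (D p.1).sub_mem hmem1 hmem0
      simpa [hpt0, hpt1, hsplit] using h
    -- Y sections
    have hinner0 : ContDiff ℝ (⊤ : ℕ∞) (fun y : E => F (y, p.2)) :=
      hF.comp (contDiff_id.prodMk contDiff_const)
    have hinner1 : ContDiff ℝ (⊤ : ℕ∞) (fun y : E => F (y, p.2 + y - p.1)) :=
      hF.comp (contDiff_id.prodMk ((contDiff_const.add contDiff_id).sub contDiff_const))
    have hY0smooth : ContDiff ℝ (⊤ : ℕ∞)
        (fun y : E => (F (y, p.2)).2 + Γ y ((F (y, p.2)).1) p.2) :=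
      (contDiff_snd.comp hinner0).add
        ((hΓ.clm_apply (contDiff_fst.comp hinner0)).clm_apply contDiff_const)
    have hY1smooth : ContDiff ℝ (⊤ : ℕ∞)
        (fun y : E => (F (y, p.2 + y - p.1)).2
          + Γ y ((F (y, p.2 + y - p.1)).1) (p.2 + y - p.1)) :=
      (contDiff_snd.comp hinner1).add
        ((hΓ.clm_apply (contDiff_fst.comp hinner1)).clm_apply
          ((contDiff_const.add contDiff_id).sub contDiff_const))
    have hY0D : ∀ y, (F (y, p.2)).2 + Γ y ((F (y, p.2)).1) p.2 ∈ D y :=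
      fun y => (hFD (y, p.2)).2
    have hY1D : ∀ y, (F (y, p.2 + y - p.1)).2
        + Γ y ((F (y, p.2 + y - p.1)).1) (p.2 + y - p.1) ∈ D y :=
      fun y => (hFD (y, p.2 + y - p.1)).2
    have hsnd0 : HasFDerivAt (fun y : E => (F (y, p.2)).2)
        ((snd ℝ E E).comp ((fderiv ℝ F p).comp
          ((ContinuousLinearMap.id ℝ E).prod 0))) p.1 :=
      hasFDerivAt_snd.comp p.1 (hF0.comp p.1 hc0)
    have hsnd1 : HasFDerivAt (fun y : E => (F (y, p.2 + y - p.1)).2)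
        ((snd ℝ E E).comp ((fderiv ℝ F p).comp
          ((ContinuousLinearMap.id ℝ E).prod (ContinuousLinearMap.id ℝ E)))) p.1 :=
      hasFDerivAt_snd.comp p.1 (hF1.comp p.1 hc1)
    obtain ⟨L0, hL0, hL0u⟩ := gammaDeriv Γ hΓ (hasFDerivAt_id p.1) hX0d
      (hasFDerivAt_const p.2 p.1)
    obtain ⟨L1, hL1, hL1u⟩ := gammaDeriv Γ hΓ (hasFDerivAt_id p.1) hX1d
      (((hasFDerivAt_id p.1).const_add p.2).sub_const p.1)
    have hY0d : HasFDerivAt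
        (fun y : E => (F (y, p.2)).2 + Γ y ((F (y, p.2)).1) p.2) _ p.1 :=
      hsnd0.add hL0
    have hY1d : HasFDerivAt
        (fun y : E => (F (y, p.2 + y - p.1)).2
          + Γ y ((F (y, p.2 + y - p.1)).1) (p.2 + y - p.1)) _ p.1 :=
      hsnd1.add hL1
    have hmemY0 := hrestrict (fun _ => g i p.1) _ hY0smooth hY0D p.1
    have hmemY1 := hrestrict (fun _ => g i p.1) _ hY1smooth hY1D p.1
    rw [covDeriv] at hmemY0 hmemY1
    rw [hY0d.fderiv] at hmemY0
    rw [hY1d.fderiv] at hmemY1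
    have hM : (fderiv ℝ F p (0, g i p.1)).2
        + Γ p.1 ((fderiv ℝ F p (0, g i p.1)).1) p.2
        + Γ p.1 ((F p).1) (g i p.1) ∈ D p.1 := by
      have h := (D p.1).sub_mem hmemY1 hmemY0
      have e0 : L0 (g i p.1) = fderiv ℝ Γ p.1 (g i p.1) ((F (p.1, p.2)).1) p.2
          + Γ p.1 ((fderiv ℝ F p ((g i p.1 : E), 0)).1) p.2 := by
        rw [hL0u]; simp
      have e1' : L1 (g i p.1) = fderiv ℝ Γ p.1 (g i p.1) ((F (p.1, p.2 + p.1 - p.1)).1)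
            (p.2 + p.1 - p.1)
          + Γ p.1 ((fderiv ℝ F p ((g i p.1 : E), g i p.1)).1) (p.2 + p.1 - p.1)
          + Γ p.1 ((F (p.1, p.2 + p.1 - p.1)).1) (g i p.1) := by
        rw [hL1u]; simp
      simp only [ContinuousLinearMap.add_apply, ContinuousLinearMap.comp_apply,
        ContinuousLinearMap.coe_id', id_eq, ContinuousLinearMap.prod_apply,
        ContinuousLinearMap.zero_apply, ContinuousLinearMap.coe_snd',
        e0, e1', hpt0, hpt1, hsplit, add_sub_cancel_right, Prod.fst_add, map_add] at h
      convert h using 1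
      abel
    have hN : fderiv ℝ (g i) p.1 ((F p).1) + Γ p.1 ((F p).1) (g i p.1) ∈ D p.1 := by
      have h := key _ hX0smooth hX0D i p.1
      rw [covDeriv] at h
      simpa [hpt0] using h
    refine ⟨?_, ?_⟩
    · simpa using (D p.1).neg_mem hda
    · have h := (D p.1).sub_mem hN hM
      convert h using 1
      simp only [map_sub, map_zero, zero_sub, map_neg, ContinuousLinearMap.neg_apply]
      abel
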